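/- arXiv:2505.18828 — 5 statements merged into one kernel-verified Lean document; each statement's English description precedes it below -/
import Mathlib

section
/- Fix k with 0 < k ≤ 1/2 and define f(y) = y - sqrt(2*k*y*(1-y)) - k for y in [k, 1]. Then f is monotonically non-decreasing on [k, 1]. -/
lemma key_sqrt_bound (k y : ℝ) (hk : 0 < k) (hky : k ≤ y) (hy1 : y ≤ 1) :
    k * (1 - 2*y) ≤ Real.sqrt (2 * k * y * (1 - y)) := by
  rcases le_or_gt (1 - 2*y) 0 with h | h
  · have : k * (1 - 2*y) ≤ 0 := mul_nonpos_of_nonneg_of_nonpos hk.le h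
    exact this.trans (Real.sqrt_nonneg _)
  · have hL : 0 ≤ k * (1 - 2*y) := by positivity
    have hsq : (k * (1 - 2*y))^2 ≤ 2 * k * y * (1 - y) := by nlinarith
    calc k * (1 - 2*y) = Real.sqrt ((k * (1 - 2*y))^2) := (Real.sqrt_sq hL).symm
    _ ≤ Real.sqrt (2 * k * y * (1 - y)) := Real.sqrt_le_sqrt hsq

theorem shifted_cdf_monotone (k : ℝ) (hk : 0 < k) (hk2 : k ≤ 1/2) :
    MonotoneOn (fun y : ℝ => y - Real.sqrt (2 * k * y * (1 - y)) - k)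
      (Set.Icc k 1) := by
  rintro a ⟨hka, ha1⟩ b ⟨hkb, hb1⟩ hab
  simp only
  set u := 2 * k * a * (1 - a) with hu_def
  set v := 2 * k * b * (1 - b) with hv_def
  have hu : 0 ≤ u := mul_nonneg (mul_nonneg (by linarith : (0:ℝ) ≤ 2*k) (by linarith : (0:ℝ) ≤ a)) (by linarith : (0:ℝ) ≤ 1-a)
  have hv : 0 ≤ v := mul_nonneg (mul_nonneg (by linarith : (0:ℝ) ≤ 2*k) (by linarith : (0:ℝ) ≤ b)) (by linarith : (0:ℝ) ≤ 1-b)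
  have h1 := key_sqrt_bound k a hk hka ha1
  have h2 := key_sqrt_bound k b hk hkb hb1
  have hsu : Real.sqrt u ^ 2 = u := Real.sq_sqrt hu
  have hsv : Real.sqrt v ^ 2 = v := Real.sq_sqrt hv
  have hnu : 0 ≤ Real.sqrt u := Real.sqrt_nonneg _
  have hnv : 0 ≤ Real.sqrt v := Real.sqrt_nonneg _
  -- goal: a - sqrt u - k ≤ b - sqrt v - k
  rcases eq_or_lt_of_le (add_nonneg hnu hnv) with hS | hS
  · have hu0 : Real.sqrt u = 0 := by linarith
    have hv0 : Real.sqrt v = 0 := by linarith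
    rw [hu0, hv0]; linarith
  · have key : (Real.sqrt v - Real.sqrt u) * (Real.sqrt u + Real.sqrt v)
        ≤ (b - a) * (Real.sqrt u + Real.sqrt v) := by
      have hvu : Real.sqrt v ^ 2 - Real.sqrt u ^ 2 = (b - a) * (k * (1 - 2*a) + k * (1 - 2*b)) := by
        rw [hsu, hsv, hu_def, hv_def]; ring
      nlinarith [mul_le_mul_of_nonneg_left h1 (sub_nonneg.mpr hab),
        mul_le_mul_of_nonneg_left h2 (sub_nonneg.mpr hab)]
    have := le_of_mul_le_mul_right (by linarith [key] : (Real.sqrt v - Real.sqrt u) * (Real.sqrt u + Real.sqrt v) ≤ (b - a) * (Real.sqrt u + Real.sqrt v)) hS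
    linarith
end

section
/- Suppose |F_D(x) - F_E(x)| ≤ sqrt(2*F_D(x)*(1-F_D(x))*k) + k for some x ∈ [0,1] and k > 0, where F_D, F_E ∈ [0,1]. Then |F_D(x) - F_E(x)| ≤ 2*sqrt(2*F_E(x)*(1-F_E(x))*k) + 6*k. -/
theorem change_of_measure_bernstein (p q k : ℝ) (hk : 0 < k)
    (hp : p ∈ Set.Icc (0:ℝ) 1) (hq : q ∈ Set.Icc (0:ℝ) 1)
    (h : |p - q| ≤ Real.sqrt (2 * p * (1 - p) * k) + k) :
    |p - q| ≤ 2 * Real.sqrt (2 * q * (1 - q) * k) + 6 * k := by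
  obtain ⟨hp0, hp1⟩ := hp
  obtain ⟨hq0, hq1⟩ := hq
  set a := |p - q| with ha_def
  have ha : 0 ≤ a := abs_nonneg _
  have h1 : p - q ≤ a := le_abs_self _
  have h2 : q - p ≤ a := by rw [ha_def, abs_sub_comm]; exact le_abs_self _
  -- Lipschitz: p(1-p) ≤ q(1-q) + a
  have hlip : 2 * p * (1 - p) * k ≤ 2 * q * (1 - q) * k + 2 * a * k := by
    rcases le_or_gt (p + q) 1 with hc | hc
    · nlinarith [mul_nonneg (mul_nonneg (sub_nonneg.2 h1) (by linarith : (0:ℝ) ≤ 1 - p - q)) hk.le,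
        mul_nonneg (mul_nonneg ha (by linarith : (0:ℝ) ≤ p + q)) hk.le]
    · nlinarith [mul_nonneg (mul_nonneg (sub_nonneg.2 h2) (by linarith : (0:ℝ) ≤ p + q - 1)) hk.le,
        mul_nonneg (mul_nonneg ha (by linarith : (0:ℝ) ≤ 2 - p - q)) hk.le]
  have hs : 0 ≤ 2 * q * (1 - q) * k :=
    mul_nonneg (mul_nonneg (mul_nonneg (by norm_num) hq0) (by linarith)) hk.le
  have hak : 0 ≤ 2 * a * k := mul_nonneg (mul_nonneg (by norm_num) ha) hk.le
  -- sqrt subadditivity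
  have hsub : Real.sqrt (2 * q * (1 - q) * k + 2 * a * k)
      ≤ Real.sqrt (2 * q * (1 - q) * k) + Real.sqrt (2 * a * k) := by
    rw [show (2 : ℝ) * q * (1 - q) * k + 2 * a * k
        = Real.sqrt (2 * q * (1 - q) * k) ^ 2 + Real.sqrt (2 * a * k) ^ 2 by
      rw [Real.sq_sqrt hs, Real.sq_sqrt hak]]
    have h1' := Real.sqrt_nonneg (2 * q * (1 - q) * k)
    have h2' := Real.sqrt_nonneg (2 * a * k)
    rw [show Real.sqrt (2 * q * (1 - q) * k) ^ 2 + Real.sqrt (2 * a * k) ^ 2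
        = (Real.sqrt (2 * q * (1 - q) * k) + Real.sqrt (2 * a * k)) ^ 2
          - 2 * Real.sqrt (2 * q * (1 - q) * k) * Real.sqrt (2 * a * k) by ring]
    calc Real.sqrt _ ≤ Real.sqrt ((Real.sqrt (2 * q * (1 - q) * k) + Real.sqrt (2 * a * k)) ^ 2) := by
          apply Real.sqrt_le_sqrt; nlinarith [mul_nonneg h1' h2']
      _ = _ := Real.sqrt_sq (by positivity)
  -- AM-GM: sqrt(2ak) ≤ a/2 + k
  have hamgm : Real.sqrt (2 * a * k) ≤ a / 2 + k := by
    have : 2 * a * k ≤ (a / 2 + k) ^ 2 := by nlinarith [sq_nonneg (a / 2 - k)]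
    calc Real.sqrt (2 * a * k) ≤ Real.sqrt ((a / 2 + k) ^ 2) := Real.sqrt_le_sqrt this
      _ = a / 2 + k := Real.sqrt_sq (by positivity)
  have hmono : Real.sqrt (2 * p * (1 - p) * k)
      ≤ Real.sqrt (2 * q * (1 - q) * k + 2 * a * k) := Real.sqrt_le_sqrt hlip
  have hsq : 0 ≤ Real.sqrt (2 * q * (1 - q) * k) := Real.sqrt_nonneg _
  linarith
end

section
/- Let σ_1 ≥ σ_2 ≥ ... ≥ σ_n be real numbers in [0,1] and let F_1, ..., F_n : [0,1] → [0,1] be non-decreasing functions. Define Q_i = ∏_{j<i} F_j(σ_i). Then ∑_{i=1}^n Q_i * (1 - F_i(σ_{i+1})) ≤ 1, where σ_{n+1} := 0 (or any value ≤ σ_n). -/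
theorem open_prob_telescoping (n : ℕ) (σ : ℕ → ℝ) (F : ℕ → ℝ → ℝ)
    (hσ01 : ∀ i, σ i ∈ Set.Icc (0:ℝ) 1)
    (hσ : ∀ i, σ (i + 1) ≤ σ i)
    (hF01 : ∀ j x, F j x ∈ Set.Icc (0:ℝ) 1)
    (hFmono : ∀ j, Monotone (F j)) :
    ∑ i ∈ Finset.range n,
        (∏ j ∈ Finset.range i, F j (σ i)) * (1 - F i (σ (i + 1))) ≤ 1 := by
  have hσanti : Antitone σ := antitone_nat_of_succ_le hσ
  set P : ℕ → ℝ := fun i => ∏ j ∈ Finset.range i, F j (σ (j+1)) with hP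
  have hPnn : ∀ i, 0 ≤ P i := fun i =>
    Finset.prod_nonneg (fun j _ => (hF01 j _).1)
  have key : ∀ i, (∏ j ∈ Finset.range i, F j (σ i)) * (1 - F i (σ (i + 1))) ≤ P i - P (i+1) := by
    intro i
    have h1 : ∏ j ∈ Finset.range i, F j (σ i) ≤ P i := by
      apply Finset.prod_le_prod (fun j _ => (hF01 j _).1)
      intro j hj
      exact hFmono j (hσanti (Finset.mem_range.mp hj))
    have h2 : P (i+1) = P i * F i (σ (i+1)) := Finset.prod_range_succ _ _
    have h3 : 0 ≤ 1 - F i (σ (i+1)) := by linarith [(hF01 i (σ (i+1))).2]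
    calc (∏ j ∈ Finset.range i, F j (σ i)) * (1 - F i (σ (i + 1)))
        ≤ P i * (1 - F i (σ (i+1))) := mul_le_mul_of_nonneg_right h1 h3
      _ = P i - P (i+1) := by rw [h2]; ring
  calc ∑ i ∈ Finset.range n, (∏ j ∈ Finset.range i, F j (σ i)) * (1 - F i (σ (i + 1)))
      ≤ ∑ i ∈ Finset.range n, (P i - P (i+1)) := Finset.sum_le_sum (fun i _ => key i)
    _ = P 0 - P n := Finset.sum_range_sub' P n
    _ ≤ 1 := by
        have : P 0 = 1 := by simp [hP]
        linarith [hPnn n]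
end

section
/- Let I be the d×d identity matrix and a_1, ..., a_N ∈ ℝ^d with ‖a_i‖_2 ≤ 1 for all i. Let V_t = I + ∑_{s≤t} a_s a_s^⊤. Then ∑_{t=1}^N min{1, ‖a_t‖²_{V_{t-1}^{-1}}} ≤ 2d log(1 + N/d). -/
/-!
Each rank-one update multiplies the determinant of the design matrix by `1 + ‖a_t‖²_{V_t⁻¹}`
(matrix determinant lemma), so `∑ log (1 + ‖a_t‖²_{V_t⁻¹}) = log det V_N`, and
`min 1 x ≤ 2 log (1 + x)` turns the left-hand side into at most `2 log det V_N`. Finally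
`log det V_N = ∑ log λ_i ≤ d log (tr V_N / d) ≤ d log (1 + N / d)` by concavity of the logarithm,
since `tr V_N ≤ d + N`.
-/

open Matrix Finset

lemma Real.min_one_le_two_mul_log_one_add {x : ℝ} (hx : 0 ≤ x) :
    min 1 x ≤ 2 * Real.log (1 + x) := by
  have hmin : min 1 x * (x + 2) ≤ 4 * x := by
    rcases le_total 1 x with h | h
    · rw [min_eq_left h]; linarith
    · rw [min_eq_right h]; nlinarith
  calc min 1 x ≤ 2 * (2 * x / (x + 2)) := by
        rw [← mul_div_assoc, le_div_iff₀ (by linarith)]; linarith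
    _ ≤ 2 * Real.log (1 + x) := by gcongr; exact Real.le_log_one_add_of_nonneg hx

section DesignMatrix

variable {n : Type*} [DecidableEq n]

def designMatrix (a : ℕ → n → ℝ) (t : ℕ) : Matrix n n ℝ :=
  1 + ∑ s ∈ range t, vecMulVec (a s) (a s)

lemma designMatrix_succ (a : ℕ → n → ℝ) (t : ℕ) :
    designMatrix a (t + 1) = designMatrix a t + vecMulVec (a t) (a t) := by
  rw [designMatrix, designMatrix, sum_range_succ, add_assoc]

variable [Fintype n]

theorem Matrix.det_add_vecMulVec {α : Type*} [CommRing α] {A : Matrix n n α}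
    (hA : IsUnit A.det) (u v : n → α) :
    (A + vecMulVec u v).det = A.det * (1 + v ⬝ᵥ A⁻¹ *ᵥ u) := by
  rw [vecMulVec_eq Unit, det_add_replicateCol_mul_replicateRow hA, Matrix.mul_assoc,
    ← replicateCol_mulVec]
  simp [replicateRow_mul_replicateCol_apply]

theorem Matrix.PosDef.log_det_le_of_trace_le {A : Matrix n n ℝ} (hA : A.PosDef) {c : ℝ}
    (hc : 0 < c) (htr : A.trace ≤ Fintype.card n * c) :
    Real.log A.det ≤ Fintype.card n * Real.log c := by
  set μ := hA.isHermitian.eigenvalues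
  have hμ : ∀ i, Real.log (μ i) ≤ μ i / c - 1 + Real.log c := fun i => by
    have := Real.log_le_sub_one_of_pos (div_pos (hA.eigenvalues_pos i) hc)
    rwa [Real.log_div (hA.eigenvalues_pos i).ne' hc.ne', sub_le_iff_le_add] at this
  have htr' : ∑ i, μ i ≤ Fintype.card n * c := by
    simpa [hA.isHermitian.trace_eq_sum_eigenvalues] using htr
  calc Real.log A.det = ∑ i, Real.log (μ i) := by
        rw [hA.isHermitian.det_eq_prod_eigenvalues]
        simpa using Real.log_prod fun i _ => (hA.eigenvalues_pos i).ne'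
    _ ≤ ∑ i, (μ i / c - 1 + Real.log c) := sum_le_sum fun i _ => hμ i
    _ = (∑ i, μ i) / c - Fintype.card n + Fintype.card n * Real.log c := by
        simp [sum_add_distrib, sum_div]
    _ ≤ Fintype.card n * Real.log c := by
        linarith [(div_le_iff₀ hc).2 htr']

lemma posDef_designMatrix (a : ℕ → n → ℝ) (t : ℕ) : (designMatrix a t).PosDef :=
  PosDef.one.add_posSemidef <| posSemidef_sum _ fun s _ => by
    simpa using posSemidef_vecMulVec_self_star (a s)

lemma det_designMatrix (a : ℕ → n → ℝ) (t : ℕ) :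
    (designMatrix a t).det = ∏ s ∈ range t, (1 + a s ⬝ᵥ (designMatrix a s)⁻¹ *ᵥ a s) := by
  induction t with
  | zero => simp [designMatrix]
  | succ t ih =>
    rw [designMatrix_succ, det_add_vecMulVec (posDef_designMatrix a t).det_pos.ne'.isUnit, ih,
      prod_range_succ]

lemma trace_designMatrix (a : ℕ → n → ℝ) (t : ℕ) :
    (designMatrix a t).trace = Fintype.card n + ∑ s ∈ range t, a s ⬝ᵥ a s := by
  simp [designMatrix, trace_sum, trace_vecMulVec]

end DesignMatrix

theorem elliptical_potential_lemma (d N : ℕ) (hd : 0 < d)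
    (a : ℕ → Fin d → ℝ)
    (hnorm : ∀ t, ∑ j, (a t j) ^ 2 ≤ 1)
    (V : ℕ → Matrix (Fin d) (Fin d) ℝ)
    (hV : ∀ t, V t = 1 + ∑ s ∈ Finset.range t, vecMulVec (a s) (a s)) :
    ∑ t ∈ Finset.range N,
        min 1 (a t ⬝ᵥ ((V t)⁻¹).mulVec (a t)) ≤
      2 * d * Real.log (1 + N / d) := by
  obtain rfl : V = designMatrix a := funext hV
  have hw : ∀ t, 0 ≤ a t ⬝ᵥ (designMatrix a t)⁻¹ *ᵥ a t := fun t =>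
    (posDef_designMatrix a t).inv.posSemidef.dotProduct_mulVec_nonneg (a t)
  have htr : (designMatrix a N).trace ≤ d * (1 + N / d) := by
    have hnorm' : ∀ t, a t ⬝ᵥ a t ≤ 1 := fun t => by simpa [dotProduct, sq] using hnorm t
    rw [trace_designMatrix, Fintype.card_fin, mul_add, mul_div_cancel₀ _ (by positivity)]
    simpa using sum_le_sum fun t (_ : t ∈ range N) => hnorm' t
  calc ∑ t ∈ range N, min 1 (a t ⬝ᵥ (designMatrix a t)⁻¹ *ᵥ a t)
      ≤ ∑ t ∈ range N, 2 * Real.log (1 + a t ⬝ᵥ (designMatrix a t)⁻¹ *ᵥ a t) :=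
        sum_le_sum fun t _ => Real.min_one_le_two_mul_log_one_add (hw t)
    _ = 2 * Real.log (designMatrix a N).det := by
        rw [det_designMatrix, Real.log_prod fun t _ => by linarith [hw t], mul_sum]
    _ ≤ 2 * (d * Real.log (1 + N / d)) := by
        gcongr
        simpa using
          (posDef_designMatrix a N).log_det_le_of_trace_le (by positivity) (by simpa using htr)
    _ = 2 * d * Real.log (1 + N / d) := by ring
end

section
/- Let F_1, ..., F_{i-1} : [0,1] → [0,1] be non-decreasing with F_j(z) representing CDFs, let σ ∈ [0,1] with Q = ∏_{j<i} F_j(σ) > 0, and let g : [0,1] → ℝ be 1-Lipschitz and non-decreasing. Suppose x_1, ..., x_{i-1} are independent with x_j ∼ F_j, conditioned on the event E = {max_{j<i} x_j < σ}. Define h(z) = E[max{z, x_1, ..., x_{i-1}} | E]. Then for all 0 ≤ v ≤ u < σ: h(u) - h(v) ≤ (u - v) * (∏_{j<i} F_j(u)) / Q. -/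
/-!
Raising the starting value of `max {z, x₁, …, xₙ}` from `v` to `u` increases it by at most
`u - v`, and not at all once some `xⱼ ≥ u`. So on the event `{max xⱼ < σ}` the gain is at most
`(u - v)` times the indicator of the smaller box `{max xⱼ < u}` (contained in it since `u < σ`),
whose product measure is `∏ⱼ Fⱼ(u)` by independence.
-/

open MeasureTheory Finset

namespace Finset

variable {ι : Type*} (s : Finset ι) (x : ι → ℝ) {u v : ℝ}

theorem le_fold_max_self (b : ℝ) : b ≤ s.fold max b x :=
  (le_fold_max _).2 (Or.inl le_rfl)

theorem apply_le_fold_max (b : ℝ) {k : ι} (hk : k ∈ s) : x k ≤ s.fold max b x :=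
  (le_fold_max _).2 (Or.inr ⟨k, hk, le_rfl⟩)

theorem fold_max_sub_fold_max_le (hvu : v ≤ u) : s.fold max u x - s.fold max v x ≤ u - v := by
  have hv := s.le_fold_max_self x v
  have hle : s.fold max u x ≤ s.fold max v x + (u - v) :=
    (fold_max_le _).2 ⟨by linarith, fun k hk => by linarith [s.apply_le_fold_max x v hk]⟩
  linarith

theorem fold_max_eq_fold_max_of_le_apply (hvu : v ≤ u) {j : ι} (hj : j ∈ s) (hu : u ≤ x j) :
    s.fold max u x = s.fold max v x :=
  le_antisymm
    ((fold_max_le _).2 ⟨hu.trans (s.apply_le_fold_max x v hj), fun _ => s.apply_le_fold_max x v⟩)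
    ((fold_max_le _).2 ⟨hvu.trans (s.le_fold_max_self x u), fun _ => s.apply_le_fold_max x u⟩)

theorem measurable_fold_max (z : ℝ) : Measurable fun x : ι → ℝ => s.fold max z x := by
  induction s using Finset.cons_induction with
  | empty => simp
  | cons a s ha ih => simpa [fold_cons] using (measurable_pi_apply a).max ih

end Finset

section Box

theorem setOf_forall_apply_lt_eq_univ_pi {ι : Type*} (c : ℝ) :
    {x : ι → ℝ | ∀ j, x j < c} = Set.univ.pi fun _ => Set.Iio c := by
  ext x
  simp

variable {ι : Type*} [Fintype ι]

theorem measurableSet_setOf_forall_apply_lt (c : ℝ) :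
    MeasurableSet {x : ι → ℝ | ∀ j, x j < c} := by
  rw [setOf_forall_apply_lt_eq_univ_pi]
  exact .univ_pi fun _ => measurableSet_Iio

theorem MeasureTheory.Measure.real_pi_setOf_forall_apply_lt (μ : ι → Measure ℝ)
    [∀ j, SigmaFinite (μ j)] (c : ℝ) :
    (Measure.pi μ).real {x : ι → ℝ | ∀ j, x j < c} = ∏ j, (μ j).real (Set.Iio c) := by
  rw [setOf_forall_apply_lt_eq_univ_pi, measureReal_def, Measure.pi_pi, ENNReal.toReal_prod]
  rfl

theorem fold_max_sub_fold_max_le_indicator (x : ι → ℝ) {u v : ℝ} (hvu : v ≤ u) :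
    univ.fold max u x - univ.fold max v x ≤
      {y : ι → ℝ | ∀ j, y j < u}.indicator (fun _ => u - v) x := by
  by_cases hx : ∀ j, x j < u
  · rw [Set.indicator_of_mem (show x ∈ {y : ι → ℝ | ∀ j, y j < u} from hx)]
    exact univ.fold_max_sub_fold_max_le x hvu
  · obtain ⟨j, hj⟩ := not_forall.1 hx
    rw [Set.indicator_of_notMem (show x ∉ {y : ι → ℝ | ∀ j, y j < u} from hx),
      univ.fold_max_eq_fold_max_of_le_apply x hvu (mem_univ j) (not_lt.1 hj), sub_self]

variable {π : Measure (ι → ℝ)} [IsFiniteMeasure π]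

theorem integrableOn_fold_max_setOf_forall_apply_lt (z σ : ℝ) :
    IntegrableOn (fun x => univ.fold max z x) {x : ι → ℝ | ∀ j, x j < σ} π := by
  refine Integrable.of_bound (univ.measurable_fold_max z).aestronglyMeasurable
    (max |z| |max z σ|)
    (ae_restrict_of_forall_mem (measurableSet_setOf_forall_apply_lt σ) fun x hx => ?_)
  exact abs_le_max_abs_abs (univ.le_fold_max_self x z)
    ((fold_max_le _).2 ⟨le_max_left z σ, fun j _ => (hx j).le.trans (le_max_right z σ)⟩)

theorem setIntegral_fold_max_sub_le {u v σ : ℝ} (hvu : v ≤ u) (huσ : u ≤ σ) :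
    ∫ x in {x : ι → ℝ | ∀ j, x j < σ}, univ.fold max u x ∂π -
        ∫ x in {x : ι → ℝ | ∀ j, x j < σ}, univ.fold max v x ∂π ≤
      (u - v) * π.real {x : ι → ℝ | ∀ j, x j < u} := by
  have hbox : {x : ι → ℝ | ∀ j, x j < u} ⊆ {x | ∀ j, x j < σ} :=
    fun x hx j => (hx j).trans_le huσ
  have hint := integrableOn_fold_max_setOf_forall_apply_lt (π := π)
  rw [← integral_sub (hint u σ) (hint v σ)]
  calc ∫ x in {x : ι → ℝ | ∀ j, x j < σ}, (univ.fold max u x - univ.fold max v x) ∂π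
      ≤ ∫ x in {x : ι → ℝ | ∀ j, x j < σ},
          {y : ι → ℝ | ∀ j, y j < u}.indicator (fun _ => u - v) x ∂π :=
        setIntegral_mono_on ((hint u σ).sub (hint v σ))
          ((integrable_const _).indicator (measurableSet_setOf_forall_apply_lt u))
          (measurableSet_setOf_forall_apply_lt σ)
          fun x _ => fold_max_sub_fold_max_le_indicator x hvu
    _ = (u - v) * π.real {x : ι → ℝ | ∀ j, x j < u} := by
        rw [setIntegral_indicator (measurableSet_setOf_forall_apply_lt u),
          Set.inter_eq_right.2 hbox, setIntegral_const, smul_eq_mul, mul_comm]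

end Box

theorem sharp_derivative_bound_general (n : ℕ) (μ : Fin n → Measure ℝ)
    [∀ j, IsProbabilityMeasure (μ j)]
    (F : Fin n → ℝ → ℝ) (hF : ∀ j x, F j x = (μ j (Set.Iio x)).toReal)
    (σ : ℝ)
    (Q : ℝ) (hQ : 0 < Q)
    (h : ℝ → ℝ)
    (hh : ∀ z, h z =
      (∫ x in {x : Fin n → ℝ | ∀ j, x j < σ},
          Finset.fold max z x Finset.univ ∂(Measure.pi μ)) / Q)
    (u v : ℝ) (hvu : v ≤ u) (huσ : u < σ) :
    h u - h v ≤ (u - v) * (∏ j, F j u) / Q := by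
  have hbox : (Measure.pi μ).real {x : Fin n → ℝ | ∀ j, x j < u} = ∏ j, F j u := by
    rw [Measure.real_pi_setOf_forall_apply_lt]
    exact prod_congr rfl fun j _ => (hF j u).symm
  rw [hh u, hh v, div_sub_div_same, ← hbox]
  exact div_le_div_of_nonneg_right (setIntegral_fold_max_sub_le hvu huσ.le) hQ.le

theorem sharp_derivative_bound (n : ℕ) (μ : Fin n → Measure ℝ)
    [∀ j, IsProbabilityMeasure (μ j)]
    (F : Fin n → ℝ → ℝ) (hF : ∀ j x, F j x = (μ j (Set.Iio x)).toReal)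
    (σ : ℝ) (hσ : σ ∈ Set.Icc (0:ℝ) 1)
    (Q : ℝ) (hQdef : Q = ∏ j, F j σ) (hQ : 0 < Q)
    (g : ℝ → ℝ) (hg : LipschitzWith 1 g) (hgmono : Monotone g)
    (h : ℝ → ℝ)
    (hh : ∀ z, h z =
      (∫ x in {x : Fin n → ℝ | ∀ j, x j < σ},
          Finset.fold max z x Finset.univ ∂(Measure.pi μ)) / Q)
    (u v : ℝ) (hv : 0 ≤ v) (hvu : v ≤ u) (huσ : u < σ) :
    h u - h v ≤ (u - v) * (∏ j, F j u) / Q :=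
  sharp_derivative_bound_general n μ F hF σ Q hQ h hh u v hvu huσ
end
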